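/- arXiv:2303.15529 — 2 statements merged into one kernel-verified Lean document; each statement's English description precedes it below -/
import Mathlib

section
/- For all positive integers k and t, the even subdivision T_{2k}(K_{t,t}) of the complete bipartite graph K_{t,t} is layered. -/
open SimpleGraph

/-- The hypercube graph `Q_n`. -/
def hypercube (n : ℕ) : SimpleGraph (Finset (Fin n)) where
  Adj A B := (A ⊆ B ∧ B.card = A.card + 1) ∨ (B ⊆ A ∧ A.card = B.card + 1)
  symm := ⟨fun A B h => h.symm⟩
  loopless := by
    refine ⟨fun A h => ?_⟩
    rcases h with ⟨-, h⟩ | ⟨-, h⟩ <;> omega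

/-- A graph is layered if it is isomorphic to a subgraph of an edge layer of a hypercube. -/
def IsLayered {V : Type*} (G : SimpleGraph V) : Prop :=
  ∃ (n k : ℕ) (f : V → Finset (Fin n)), Function.Injective f ∧
    (∀ v, (f v).card = k ∨ (f v).card + 1 = k) ∧
    ∀ u v, G.Adj u v → (hypercube n).Adj (f u) (f v)

/-- The \`m\`-subdivision \`T_m(K_{t,t})\` of the complete bipartite graph \`K_{t,t}\`: each
edge \`(i,j)\` is replaced by a path \`i, ((i,j),0), …, ((i,j),m-1), j\` with \`m\` new internal
vertices. -/
def subdividedCompleteBipartite (t m : ℕ) :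
    SimpleGraph ((Fin t ⊕ Fin t) ⊕ ((Fin t × Fin t) × Fin m)) :=
  SimpleGraph.fromRel (fun x y =>
    match x, y with
    | Sum.inl (Sum.inl u), Sum.inr (e, l) => u = e.1 ∧ l.val = 0
    | Sum.inl (Sum.inr v), Sum.inr (e, l) => v = e.2 ∧ l.val = m - 1
    | Sum.inr (e, l), Sum.inr (e', l') => e = e' ∧ l.val + 1 = l'.val
    | _, _ => False)

/-!
Take a ground set of `t` core elements `z_i` together with elements `a_{i,r}` and `b_{j,s}`
for `i, j < t` and `r, s < k`. Label the left vertex `i` by `(Z - z_i) ∪ A_i` and the right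
vertex `j` by `Z ∪ B_j`; the path from `i` to `j` walks from the first label to the second by
alternately adding `b_{j,0}, b_{j,1}, …` and removing `a_{i,0}, a_{i,1}, …`, its last edge adding
`z_i`; the `2k` internal vertices are exactly what this walk needs. All labels have size
`t + k - 1` or `t + k` and adjacent labels are nested, so distinct adjacent labels differ in
exactly one element.
-/

open Finset

theorem isLayered_of_injective_of_comparable {V α : Type*} [Fintype α] {G : SimpleGraph V}
    (f : V → Finset α) (k : ℕ) (hf : Function.Injective f)
    (hcard : ∀ v, #(f v) = k ∨ #(f v) + 1 = k)
    (hadj : ∀ u v, G.Adj u v → f u ⊆ f v ∨ f v ⊆ f u) : IsLayered G := by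
  let e := (Fintype.equivFin α).toEmbedding
  refine ⟨Fintype.card α, k, fun v => (f v).map e, (Finset.map_injective e).comp hf,
    fun v => by simpa only [card_map] using hcard v, fun u v huv => ?_⟩
  have hne : f u ≠ f v := hf.ne huv.ne
  have card_eq_succ : ∀ {a b}, f a ⊂ f b → #(f b) = #(f a) + 1 := fun {a b} hab => by
    have := card_lt_card hab
    rcases hcard a with _ | _ <;> rcases hcard b with _ | _ <;> omega
  simp only [hypercube, map_subset_map, card_map]
  rcases hadj u v huv with h | h
  · exact Or.inl ⟨h, card_eq_succ (h.ssubset_of_ne hne)⟩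
  · exact Or.inr ⟨h, card_eq_succ (h.ssubset_of_ne hne.symm)⟩

theorem Fin.card_filter_le_val (n m : ℕ) : #{i : Fin n | m ≤ (i : ℕ)} = n - m := by
  have := card_filter_add_card_filter_not (s := univ) (fun i : Fin n => (i : ℕ) < m)
  simp only [Fin.card_filter_val_lt, not_lt, card_univ, Fintype.card_fin] at this
  omega

theorem Fin.card_filter_val_le (n m : ℕ) : #{i : Fin n | (i : ℕ) ≤ m} = min n (m + 1) := by
  simp only [← Nat.lt_succ_iff, Fin.card_filter_val_lt]

namespace subdividedCompleteBipartite

variable {t k : ℕ}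

/-- `inl i` is `z_i`, `inr (inl (i, r))` is `a_{i,r}` and `inr (inr (j, s))` is `b_{j,s}`. -/
def label : (Fin t ⊕ Fin t) ⊕ ((Fin t × Fin t) × Fin (2 * k)) →
    Finset (Fin t ⊕ (Fin t × Fin k) ⊕ (Fin t × Fin k))
  | .inl (.inl i) => (univ.erase i).disjSum (({i} ×ˢ univ).disjSum ∅)
  | .inl (.inr j) => univ.disjSum ((∅ : Finset _).disjSum ({j} ×ˢ univ))
  | .inr ((i, j), l) => (univ.erase i).disjSum
      (({i} ×ˢ ({r | (l + 1) / 2 ≤ (r : ℕ)} : Finset (Fin k))).disjSum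
        ({j} ×ˢ ({s | (s : ℕ) ≤ l / 2} : Finset (Fin k))))

theorem card_label (v : (Fin t ⊕ Fin t) ⊕ ((Fin t × Fin t) × Fin (2 * k))) :
    #(label v) = t + k ∨ #(label v) + 1 = t + k := by
  rcases v with (i | j) | ⟨⟨i, j⟩, l⟩
  · have := i.pos
    simp only [label, singleton_product, disjSum_empty, card_disjSum, mem_univ,
      card_erase_of_mem, card_univ, Fintype.card_fin, card_map]
    omega
  · simp [label, card_disjSum]
  · have := i.pos
    have := l.isLt
    simp only [label, singleton_product, card_disjSum, mem_univ, card_erase_of_mem, card_univ,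
      Fintype.card_fin, card_map, Fin.card_filter_le_val, Fin.card_filter_val_le]
    omega

theorem label_injective (hk : 0 < k) :
    Function.Injective (label : _ → Finset (Fin t ⊕ (Fin t × Fin k) ⊕ (Fin t × Fin k))) := by
  intro u v h
  have mem x : x ∈ label u ↔ x ∈ label v := by rw [h]
  have b0 j := mem (.inr (.inr (j, ⟨0, hk⟩)))
  rcases u with (i | j) | ⟨⟨i, j⟩, l⟩ <;> rcases v with (i' | j') | ⟨⟨i', j'⟩, l'⟩
  · simpa [label, eq_comm] using mem (.inl i)
  · simpa [label] using mem (.inl i)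
  · simpa [label] using b0 j'
  · simpa [label] using mem (.inl i')
  · simpa [label, eq_comm] using b0 j
  · simpa [label] using mem (.inl i')
  · simpa [label, eq_comm] using b0 j
  · simpa [label] using mem (.inl i)
  · obtain rfl : i = i' := by simpa [label, eq_comm] using mem (.inl i)
    obtain rfl : j = j' := by simpa [label, eq_comm] using b0 j
    -- `b_{j, l / 2}` pins down `l / 2` and `a_{i, l / 2}` the parity of `l`
    have hb := mem (.inr (.inr (j, ⟨l / 2, by omega⟩)))
    have hb' := mem (.inr (.inr (j, ⟨l' / 2, by omega⟩)))
    have ha := mem (.inr (.inl (i, ⟨l / 2, by omega⟩)))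
    have ha' := mem (.inr (.inl (i, ⟨l' / 2, by omega⟩)))
    simp only [label, singleton_product, inl_mem_disjSum, inr_mem_disjSum, mem_map_mk,
      mem_filter, mem_univ, le_refl, true_and, true_iff, iff_true] at hb hb' ha ha'
    simp only [Sum.inr.injEq, Prod.mk.injEq, true_and]
    omega

theorem label_inr_subset_label_inr {i j : Fin t} {l l' : Fin (2 * k)}
    (ha : ((l' : ℕ) + 1) / 2 ≤ ((l : ℕ) + 1) / 2) (hb : (l : ℕ) / 2 ≤ (l' : ℕ) / 2) :
    label (.inr ((i, j), l)) ⊆ label (.inr ((i, j), l')) := by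
  rintro (z | ⟨w, r⟩ | ⟨w, s⟩) <;>
    simp only [label, inl_mem_disjSum, inr_mem_disjSum, mem_erase, mem_product, mem_singleton,
      mem_filter, mem_univ, and_true, true_and, imp_self] <;> omega

theorem label_inl_inl_subset {i j : Fin t} {l : Fin (2 * k)} (hl : (l : ℕ) = 0) :
    label (.inl (.inl i)) ⊆ label (.inr ((i, j), l)) := by
  rintro (z | ⟨w, r⟩ | ⟨w, s⟩) <;>
    simp only [label, inl_mem_disjSum, inr_mem_disjSum, mem_erase, mem_product, mem_singleton,
      mem_filter, mem_univ, notMem_empty, and_true, true_and, imp_self, false_implies]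
  omega

theorem label_subset_inl_inr {i j : Fin t} {l : Fin (2 * k)} (hl : (l : ℕ) = 2 * k - 1) :
    label (.inr ((i, j), l)) ⊆ label (.inl (.inr j)) := by
  rintro (z | ⟨w, r⟩ | ⟨w, s⟩) <;>
    simp only [label, inl_mem_disjSum, inr_mem_disjSum, mem_erase, mem_product, mem_singleton,
      mem_filter, mem_univ, and_true, true_and, implies_true] <;> omega

theorem label_inr_comparable_of_succ {i j : Fin t} {l l' : Fin (2 * k)}
    (hl : (l : ℕ) + 1 = l') :
    label (.inr ((i, j), l)) ⊆ label (.inr ((i, j), l')) ∨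
      label (.inr ((i, j), l')) ⊆ label (.inr ((i, j), l)) := by
  rcases Nat.mod_two_eq_zero_or_one l with h | h
  · exact .inr (label_inr_subset_label_inr (by omega) (by omega))
  · exact .inl (label_inr_subset_label_inr (by omega) (by omega))

theorem label_comparable_of_adj {u v} (h : (subdividedCompleteBipartite t (2 * k)).Adj u v) :
    label u ⊆ label v ∨ label v ⊆ label u := by
  rw [subdividedCompleteBipartite, fromRel_adj] at h
  rcases u with (i | j) | ⟨⟨i, j⟩, l⟩ <;> rcases v with (i' | j') | ⟨⟨i', j'⟩, l'⟩ <;>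
    simp only [ne_eq, Sum.inl.injEq, Sum.inr.injEq, reduceCtorEq, not_false_eq_true, or_self,
      and_false, or_false, false_or, true_and] at h
  · obtain ⟨rfl, hl⟩ := h
    exact .inl (label_inl_inl_subset hl)
  · obtain ⟨rfl, hl⟩ := h
    exact .inr (label_subset_inl_inr hl)
  · obtain ⟨rfl, hl⟩ := h
    exact .inr (label_inl_inl_subset hl)
  · obtain ⟨rfl, hl⟩ := h
    exact .inl (label_subset_inl_inr hl)
  · rcases h.2 with ⟨⟨rfl, rfl⟩, hl⟩ | ⟨⟨rfl, rfl⟩, hl⟩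
    exacts [label_inr_comparable_of_succ hl, (label_inr_comparable_of_succ hl).symm]

end subdividedCompleteBipartite

theorem even_subdivision_complete_bipartite_layered_general (k t : ℕ) (hk : 1 ≤ k) :
    IsLayered (subdividedCompleteBipartite t (2 * k)) :=
  isLayered_of_injective_of_comparable _ (t + k)
    (subdividedCompleteBipartite.label_injective hk) subdividedCompleteBipartite.card_label
    fun _ _ => subdividedCompleteBipartite.label_comparable_of_adj

/-- For all positive integers `k` and `t`, the even subdivision `T_{2k}(K_{t,t})` is
layered. -/
theorem even_subdivision_complete_bipartite_layered (k t : ℕ) (hk : 1 ≤ k) (ht : 1 ≤ t) :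
    IsLayered (subdividedCompleteBipartite t (2 * k)) :=
  even_subdivision_complete_bipartite_layered_general k t hk
end

section
/- ex*(Q_3, C_6^-) = 8; that is, the largest number of edges of a subgraph of the 3-dimensional hypercube Q_3 containing no C_6^- equals 8. -/
open SimpleGraph

/-- The number of edges of a graph. -/
noncomputable def numEdges {V : Type*} (G : SimpleGraph V) : ℕ := Nat.card G.edgeSet

/-- \`G\` contains a \`C₆⁻\`: a subgraph with 6 vertices and 5 edges that is a subgraph of a
6-cycle of \`Q_n\` (a 6-cycle of the hypercube with one edge removed). -/
def ContainsC6Minus (n : ℕ) (G : SimpleGraph (Finset (Fin n))) : Prop :=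
  ∃ f : Fin 6 → Finset (Fin n), Function.Injective f ∧
    (∀ j : Fin 6, (hypercube n).Adj (f j) (f (j + 1))) ∧
    ∃ i : Fin 6, ∀ j : Fin 6, j ≠ i → G.Adj (f j) (f (j + 1))

/-!
Lower bound: deleting the four edges of one direction leaves two disjoint 4-cycles. Adjacency
then preserves membership of that coordinate, so the six vertices of a `C₆⁻` would lie in a
half-cube of only four vertices.

Upper bound: for each antipodal pair `{u, uᶜ}`, `Q_3 - {u, uᶜ}` is a 6-cycle, and these four
hexagons cover every edge exactly twice. A `C₆⁻`-free `G` misses at least two edges of each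
hexagon, i.e. at least eight edge–hexagon incidences, so it misses at least four edges.
-/

open Finset
open scoped symmDiff

instance (n : ℕ) : DecidableRel (hypercube n).Adj := fun A B =>
  inferInstanceAs (Decidable ((A ⊆ B ∧ B.card = A.card + 1) ∨ (B ⊆ A ∧ A.card = B.card + 1)))

lemma numEdges_eq_card_edgeFinset {V : Type*} [Fintype V] (G : SimpleGraph V)
    [DecidableRel G.Adj] : numEdges G = #G.edgeFinset := by
  rw [numEdges, Nat.card_eq_fintype_card, edgeFinset_card]

lemma ContainsC6Minus.exists_six_le_card_fiber {n : ℕ} {G : SimpleGraph (Finset (Fin n))}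
    {β : Type*} [DecidableEq β] (c : Finset (Fin n) → β) (hc : ∀ A B, G.Adj A B → c A = c B)
    (hG : ContainsC6Minus n G) : ∃ b, 6 ≤ #{A | c A = b} := by
  obtain ⟨f, hf, -, i, hpath⟩ := hG
  have hstep : ∀ i k : Fin 6, k ≠ 5 → i + 1 + k ≠ i := by decide
  have hconst : ∀ k : Fin 6, c (f (i + 1 + k)) = c (f (i + 1)) := by
    refine Fin.induction (by simp) fun k ih => ?_
    rw [← ih, ← Fin.coeSucc_eq_succ, ← add_assoc]
    exact (hc _ _ (hpath _ (hstep i _ (Fin.castSucc_lt_last k).ne))).symm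
  refine ⟨c (f (i + 1)), ?_⟩
  calc 6 = #(univ : Finset (Fin 6)) := rfl
    _ ≤ #{A | c A = c (f (i + 1))} := by
      refine card_le_card_of_injOn f (fun j _ => ?_) hf.injOn
      simpa [show i + 1 + (j - i - 1) = j by abel] using hconst (j - i - 1)

lemma containsC6Minus_of_card_le_one {n : ℕ} {G : SimpleGraph (Finset (Fin n))}
    [DecidableRel G.Adj] {f : Fin 6 → Finset (Fin n)} (hf : Function.Injective f)
    (hcycle : ∀ j, (hypercube n).Adj (f j) (f (j + 1)))
    (hmissing : #{j | ¬ G.Adj (f j) (f (j + 1))} ≤ 1) : ContainsC6Minus n G := by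
  obtain ⟨i, hi⟩ := card_le_one_iff_subset_singleton.mp hmissing
  refine ⟨f, hf, hcycle, i, fun j hj => ?_⟩
  by_contra hnadj
  exact hj (mem_singleton.mp (hi (by simpa using hnadj)))

def hypercubeDeleteDirection (n : ℕ) (i : Fin n) : SimpleGraph (Finset (Fin n)) where
  Adj A B := (hypercube n).Adj A B ∧ (i ∈ A ↔ i ∈ B)
  symm := ⟨fun _ _ h => ⟨h.1.symm, h.2.symm⟩⟩
  loopless := ⟨fun A h => (hypercube n).loopless.irrefl A h.1⟩

instance (n : ℕ) (i : Fin n) : DecidableRel (hypercubeDeleteDirection n i).Adj := fun A B =>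
  inferInstanceAs (Decidable ((hypercube n).Adj A B ∧ (i ∈ A ↔ i ∈ B)))

lemma hypercubeDeleteDirection_le (n : ℕ) (i : Fin n) :
    hypercubeDeleteDirection n i ≤ hypercube n := fun _ _ h => h.1

lemma numEdges_hypercubeDeleteDirection_three :
    numEdges (hypercubeDeleteDirection 3 0) = 8 := by
  rw [numEdges_eq_card_edgeFinset]; decide

lemma not_containsC6Minus_hypercubeDeleteDirection_three :
    ¬ ContainsC6Minus 3 (hypercubeDeleteDirection 3 0) := by
  intro h
  obtain ⟨b, hb⟩ := h.exists_six_le_card_fiber (fun A => decide (0 ∈ A))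
    (fun A B hAB => by simpa using hAB.2)
  revert hb; cases b <;> decide

/-- The six vertices at distance 1 or 2 from `u`, in cyclic order: `Q_3 - {u, uᶜ}` is this
6-cycle, and `hexagon uᶜ` runs through the same cycle. -/
def hexagon (u : Finset (Fin 3)) (j : Fin 6) : Finset (Fin 3) :=
  u ∆ ![{0}, {0, 1}, {1}, {1, 2}, {2}, {0, 2}] j

lemma hexagon_injective (u : Finset (Fin 3)) : Function.Injective (hexagon u) :=
  (symmDiff_right_injective u).comp (by decide)

lemma hexagon_adj (u : Finset (Fin 3)) (j : Fin 6) :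
    (hypercube 3).Adj (hexagon u j) (hexagon u (j + 1)) := by
  revert u j; decide

def hexagonEdge (p : Finset (Fin 3) × Fin 6) : Sym2 (Finset (Fin 3)) :=
  s(hexagon p.1 p.2, hexagon p.1 (p.2 + 1))

-- Each edge of `Q_3` lies on two of the four hexagons, and each hexagon is listed twice.
lemma card_hexagonEdge_fiber_le (e : Sym2 (Finset (Fin 3))) :
    #{p | hexagonEdge p = e} ≤ 4 := by
  induction e using Sym2.ind with
  | h A B => revert A B; decide

lemma numEdges_le_eight_of_not_containsC6Minus {G : SimpleGraph (Finset (Fin 3))}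
    (hle : G ≤ hypercube 3) (hG : ¬ ContainsC6Minus 3 G) : numEdges G ≤ 8 := by
  classical
  let P : Finset (Finset (Fin 3) × Fin 6) := {p | hexagonEdge p ∉ G.edgeSet}
  let M := (hypercube 3).edgeFinset \ G.edgeFinset
  have hP : 16 ≤ #P := by
    have hmissing (u : Finset (Fin 3)) :
        2 ≤ #{j | ¬ G.Adj (hexagon u j) (hexagon u (j + 1))} := by
      by_contra! h
      exact hG (containsC6Minus_of_card_le_one (hexagon_injective u) (hexagon_adj u) (by omega))
    calc 16 = ∑ _u : Finset (Fin 3), 2 := rfl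
      _ ≤ ∑ u, #{j | ¬ G.Adj (hexagon u j) (hexagon u (j + 1))} :=
        sum_le_sum fun u _ => hmissing u
      _ = #P := by simp only [P, card_filter, Fintype.sum_prod_type]; rfl
  have hPM : #P ≤ 4 * #M := by
    refine card_le_mul_card_image_of_maps_to (fun p hp => ?_) 4
      fun e _ => (card_le_card (filter_subset_filter _ (subset_univ P))).trans
        (card_hexagonEdge_fiber_le e)
    simp only [P, mem_filter, mem_univ, true_and] at hp
    simpa [M, hexagonEdge] using ⟨hexagon_adj p.1 p.2, hp⟩
  have hM : #M = 12 - #G.edgeFinset := by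
    rw [card_sdiff_of_subset (edgeFinset_mono hle)]; rfl
  rw [numEdges_eq_card_edgeFinset]
  omega

/-- `ex*(Q_3, C₆⁻) = 8`: the largest number of edges of a subgraph of `Q_3` containing no
`C₆⁻` equals 8. -/
theorem ex_C6minus_Q3 :
    (∃ G : SimpleGraph (Finset (Fin 3)), G ≤ hypercube 3 ∧ ¬ ContainsC6Minus 3 G ∧
      numEdges G = 8) ∧
    ∀ G : SimpleGraph (Finset (Fin 3)), G ≤ hypercube 3 → ¬ ContainsC6Minus 3 G →
      numEdges G ≤ 8 :=
  ⟨⟨hypercubeDeleteDirection 3 0, hypercubeDeleteDirection_le 3 0,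
    not_containsC6Minus_hypercubeDeleteDirection_three, numEdges_hypercubeDeleteDirection_three⟩,
   fun _ => numEdges_le_eight_of_not_containsC6Minus⟩
end
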